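/- Let p ≥ 5 be prime, k algebraically closed of characteristic p, and let A¹ ∪₀ A¹ denote Spec k[x,y]/(xy). Define L : A¹ ∪₀ A¹ → P¹ by sending (x,0) with x ≠ 0 to x, (0,y) with y ≠ 0 to y + y^{-1} ∈ A¹ ⊂ P¹, and (0,0) to ∞. This map is a morphism of k-schemes, is surjective and quasi-finite, restricts to an isomorphism on the x-line {y=0} ∪ {∞-chart near (0,0)}, and on the open locus {y ≠ 0} is a finite flat degree-2 cover of A¹ branched exactly over t = ±2. -/
import Mathlib


open OnePoint

lemma quad_root {k : Type} [Field k] [IsAlgClosed k] (t : k) :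
    ∃ y₀ : k, y₀ ≠ 0 ∧ y₀ + y₀⁻¹ = t ∧
      ∀ y : k, y ≠ 0 → (y + y⁻¹ = t ↔ y = y₀ ∨ y = y₀⁻¹) := by
  have hdeg : (Polynomial.X ^ 2 - Polynomial.C t * Polynomial.X + 1 : Polynomial k).degree = 2 := by
    compute_degree!
  obtain ⟨y₀, hy₀⟩ := IsAlgClosed.exists_root
    (Polynomial.X ^ 2 - Polynomial.C t * Polynomial.X + 1 : Polynomial k) (by rw [hdeg]; simp)
  have hroot : y₀ * y₀ + 1 = t * y₀ := by
    have := hy₀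
    simp [Polynomial.IsRoot, sq] at this
    linear_combination this
  have hne : y₀ ≠ 0 := by
    rintro rfl
    simp at hroot
  have hsum : y₀ + y₀⁻¹ = t := by
    field_simp
    linear_combination hroot
  refine ⟨y₀, hne, hsum, fun y hy => ⟨fun h => ?_, ?_⟩⟩
  · have h2 : y * y + 1 = t * y := by
      field_simp at h
      linear_combination h
    have h3 : (y - y₀) * (y + y₀ - t) = 0 := by linear_combination h2 - hroot
    rcases mul_eq_zero.mp h3 with h4 | h4
    · exact Or.inl (sub_eq_zero.mp h4)
    · right
      linear_combination h4 - hsum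
  · rintro (rfl | rfl)
    · exact hsum
    · rw [inv_inv, add_comm]; exact hsum

/-- `p ≥ 5` prime, `k` algebraically closed of characteristic `p`.  On
`A¹ ∪₀ A¹ = Spec k[x,y]/(xy)` (modeled by its points, pairs `(x,y)` with `xy = 0`), the map
`L` to `P¹ = OnePoint k` sending `(x,0), x ≠ 0,` to `x`, `(0,y), y ≠ 0,` to `y + y⁻¹`, and
`(0,0)` to `∞`, is surjective and quasi-finite (finite fibers), restricts to a bijection of
the `x`-line onto `{∞} ∪ (A¹ \ {0})` (the chart at `∞` around the image of the origin), and
on the open locus `{y ≠ 0}` is a degree-2 cover of `A¹` branched exactly over `t = ±2`. -/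
theorem stmt15 (p : ℕ) (hp : p.Prime) (h5 : 5 ≤ p)
    (k : Type) [Field k] [IsAlgClosed k] [CharP k p]
    (L : {v : k × k // v.1 * v.2 = 0} → OnePoint k)
    (hLx : ∀ x : k, x ≠ 0 → L ⟨(x, 0), by simp⟩ = (x : OnePoint k))
    (hLy : ∀ y : k, y ≠ 0 → L ⟨(0, y), by simp⟩ = ((y + y⁻¹ : k) : OnePoint k))
    (hL0 : L ⟨(0, 0), by simp⟩ = (∞ : OnePoint k)) :
    Function.Surjective L ∧
    (∀ t : OnePoint k, (L ⁻¹' {t}).Finite) ∧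
    Set.BijOn L {v : {v : k × k // v.1 * v.2 = 0} | v.1.2 = 0}
      (insert (∞ : OnePoint k) ((fun x : k => (x : OnePoint k)) '' {x : k | x ≠ 0})) ∧
    (∀ t : k, t ≠ 2 → t ≠ -2 →
      Nat.card {v : {v : k × k // v.1 * v.2 = 0} //
        v.1.1 = 0 ∧ v.1.2 ≠ 0 ∧ L v = (t : OnePoint k)} = 2) ∧
    (∀ t : k, (t = 2 ∨ t = -2) →
      Nat.card {v : {v : k × k // v.1 * v.2 = 0} //
        v.1.1 = 0 ∧ v.1.2 ≠ 0 ∧ L v = (t : OnePoint k)} = 1) := by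
  -- the fiber over a finite point, restricted to the y-axis, is in bijection with
  -- { y ≠ 0 | y + y⁻¹ = t }
  have card_eq : ∀ t : k,
      Nat.card {v : {v : k × k // v.1 * v.2 = 0} //
        v.1.1 = 0 ∧ v.1.2 ≠ 0 ∧ L v = (t : OnePoint k)} =
      Nat.card {y : k // y ≠ 0 ∧ y + y⁻¹ = t} := by
    intro t
    refine Nat.card_congr ⟨fun v => ⟨v.1.1.2, v.2.2.1, ?_⟩,
      fun y => ⟨⟨(0, y.1), by simp⟩, rfl, y.2.1, ?_⟩, ?_, ?_⟩
    · obtain ⟨⟨⟨x, y⟩, hxy⟩, hx, hy, hL⟩ := v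
      simp only at hx hy hL ⊢
      subst hx
      rw [hLy y hy] at hL
      exact OnePoint.coe_eq_coe.mp hL
    · rw [hLy y.1 y.2.1, y.2.2]
    · rintro ⟨⟨⟨x, y⟩, hxy⟩, hx, hy, hL⟩
      simp only at hx
      subst hx
      rfl
    · rintro ⟨y, hy⟩
      rfl
  have fib_eq : ∀ t : k, ∀ y₀ : k, y₀ ≠ 0 → y₀ + y₀⁻¹ = t →
      (∀ y : k, y ≠ 0 → (y + y⁻¹ = t ↔ y = y₀ ∨ y = y₀⁻¹)) →
      {y : k | y ≠ 0 ∧ y + y⁻¹ = t} = {y₀, y₀⁻¹} := by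
    intro t y₀ hne hsum hiff
    ext y
    simp only [Set.mem_setOf_eq, Set.mem_insert_iff, Set.mem_singleton_iff]
    constructor
    · rintro ⟨hy, h⟩; exact (hiff y hy).mp h
    · rintro (rfl | rfl)
      · exact ⟨hne, hsum⟩
      · exact ⟨inv_ne_zero hne, (hiff _ (inv_ne_zero hne)).mpr (Or.inr rfl)⟩
  refine ⟨?_, ?_, ⟨?_, ?_, ?_⟩, ?_, ?_⟩
  · -- surjective
    rintro (_ | t)
    · exact ⟨⟨(0, 0), by simp⟩, hL0⟩
    · obtain ⟨y₀, hne, hsum, -⟩ := quad_root t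
      exact ⟨⟨(0, y₀), by simp⟩, by rw [hLy y₀ hne, hsum]; rfl⟩
  · -- finite fibers
    rintro (_ | t)
    · refine Set.Finite.subset (Set.finite_singleton (⟨(0, 0), by simp⟩ :
        {v : k × k // v.1 * v.2 = 0})) ?_
      rintro ⟨⟨x, y⟩, hxy⟩ hL
      simp only [Set.mem_preimage, Set.mem_singleton_iff] at hL ⊢
      rcases mul_eq_zero.mp hxy with hx | hy
      · subst hx
        by_cases hy : y = 0
        · subst hy; rfl
        · rw [hLy y hy] at hL; exact absurd hL (OnePoint.coe_ne_infty _)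
      · subst hy
        by_cases hx : x = 0
        · subst hx; rfl
        · rw [hLx x hx] at hL; exact absurd hL (OnePoint.coe_ne_infty _)
    · obtain ⟨y₀, hne, hsum, hiff⟩ := quad_root t
      refine Set.Finite.subset ((((Set.finite_singleton (⟨(0, y₀⁻¹), by simp⟩ : {v : k × k // v.1 * v.2 = 0})).insert
        ⟨(0, y₀), by simp⟩).insert ⟨(t, 0), by simp⟩)) ?_
      rintro ⟨⟨x, y⟩, hxy⟩ hL
      simp only [Set.mem_preimage, Set.mem_singleton_iff, Set.mem_insert_iff] at hL ⊢
      rcases mul_eq_zero.mp hxy with hx | hy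
      · subst hx
        by_cases hy : y = 0
        · subst hy; rw [hL0] at hL; exact absurd hL.symm (OnePoint.coe_ne_infty _)
        · rw [hLy y hy] at hL
          rcases (hiff y hy).mp (OnePoint.coe_eq_coe.mp hL) with rfl | rfl
          · exact Or.inr (Or.inl rfl)
          · exact Or.inr (Or.inr rfl)
      · subst hy
        by_cases hx : x = 0
        · subst hx; rw [hL0] at hL; exact absurd hL.symm (OnePoint.coe_ne_infty _)
        · rw [hLx x hx] at hL
          have hxt : x = t := OnePoint.coe_eq_coe.mp hL
          subst hxt
          exact Or.inl rfl
  · -- MapsTo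
    rintro ⟨⟨x, y⟩, hxy⟩ hv
    simp only [Set.mem_setOf_eq] at hv
    subst hv
    by_cases hx : x = 0
    · subst hx
      rw [hL0]
      exact Set.mem_insert _ _
    · rw [hLx x hx]
      exact Set.mem_insert_of_mem _ ⟨x, hx, rfl⟩
  · -- InjOn
    rintro ⟨⟨x, y⟩, hxy⟩ hv ⟨⟨x', y'⟩, hxy'⟩ hw h
    simp only [Set.mem_setOf_eq] at hv hw
    subst hv; subst hw
    by_cases hx : x = 0 <;> by_cases hx' : x' = 0
    · subst hx; subst hx'; rfl
    · subst hx; rw [hL0, hLx x' hx'] at h; exact absurd h.symm (OnePoint.coe_ne_infty _)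
    · subst hx'; rw [hL0, hLx x hx] at h; exact absurd h (OnePoint.coe_ne_infty _)
    · rw [hLx x hx, hLx x' hx'] at h
      simp [OnePoint.coe_eq_coe.mp h]
  · -- SurjOn
    rintro u hu
    rcases Set.mem_insert_iff.mp hu with rfl | ⟨x, hx, rfl⟩
    · exact ⟨⟨(0, 0), by simp⟩, rfl, hL0⟩
    · exact ⟨⟨(x, 0), by simp⟩, rfl, hLx x hx⟩
  · -- unbranched fibers
    intro t ht2 ht2'
    obtain ⟨y₀, hne, hsum, hiff⟩ := quad_root t
    have hd : y₀ ≠ y₀⁻¹ := by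
      intro h
      have h1 : y₀ * y₀ = 1 := by
        field_simp at h
        linear_combination h
      have h2 : (y₀ - 1) * (y₀ + 1) = 0 := by linear_combination h1
      rcases mul_eq_zero.mp h2 with h3 | h3
      · apply ht2
        rw [← hsum, sub_eq_zero.mp h3]
        norm_num
      · apply ht2'
        have : y₀ = -1 := by linear_combination h3
        rw [← hsum, this]
        norm_num
    rw [card_eq t]
    rw [show {y : k // y ≠ 0 ∧ y + y⁻¹ = t} = ↥{y : k | y ≠ 0 ∧ y + y⁻¹ = t} from rfl,
      Nat.card_coe_set_eq, fib_eq t y₀ hne hsum hiff]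
    exact Set.ncard_pair hd
  · -- branched fibers
    rintro t ht
    obtain ⟨y₀, hne, hsum, hiff⟩ := quad_root t
    have h := hsum
    field_simp at h
    have hd : y₀ = y₀⁻¹ := by
      rcases ht with rfl | rfl
      · have h3 : y₀ = 1 := by
          have h2 : (y₀ - 1) * (y₀ - 1) = 0 := by linear_combination h
          linear_combination mul_self_eq_zero.mp h2
        rw [h3]; norm_num
      · have h3 : y₀ = -1 := by
          have h2 : (y₀ + 1) * (y₀ + 1) = 0 := by linear_combination h
          linear_combination mul_self_eq_zero.mp h2
        rw [h3]; norm_num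
    rw [card_eq t]
    rw [show {y : k // y ≠ 0 ∧ y + y⁻¹ = t} = ↥{y : k | y ≠ 0 ∧ y + y⁻¹ = t} from rfl,
      Nat.card_coe_set_eq, fib_eq t y₀ hne hsum hiff, ← hd, Set.pair_eq_singleton]
    exact Set.ncard_singleton _
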